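/- Let X, Y ∈ Σⁿ where X consists of n pairwise distinct characters, and Y is obtained by moving the last s characters of X to the front, with s ≤ n/2. Then ED(X,Y) = 2s, and for any substring pair X[i..j), Y[i..j) with j − i ≥ 2s, the edit distance ED(X[i..j), Y[i..j)) = 2s as well. -/

import Mathlib

/-- Costs for the Levenshtein distance (formerly in Mathlib, `Mathlib.Data.List.EditDistance.Defs`). -/
structure Levenshtein.Cost (α β δ : Type*) where
  delete : α → δ
  insert : β → δ
  substitute : α → β → δ

/-- The default unit costs (formerly in Mathlib). -/
def Levenshtein.defaultCost {α : Type*} [DecidableEq α] : Levenshtein.Cost α α ℕ where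
  delete _ := 1
  insert _ := 1
  substitute a b := if a = b then 0 else 1

/-- Inner step of `suffixLevenshtein` (formerly in Mathlib). -/
def Levenshtein.impl {α β δ : Type*} [AddZeroClass δ] [Min δ] (C : Levenshtein.Cost α β δ)
    (xs : List α) (y : β) (d : {r : List δ // 0 < r.length}) : {r : List δ // 0 < r.length} :=
  let ⟨ds, w⟩ := d
  xs.zip (ds.zip ds.tail) |>.foldr
    (init := ⟨[ds.getLast (List.length_pos_iff.mp w) + C.insert y], by simp⟩)
    (fun ⟨x, d₀, d₁⟩ ⟨r, w⟩ =>
      ⟨min (C.delete x + r[0]) (min (C.insert y + d₀) (C.substitute x y + d₁)) :: r, by simp⟩)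

/-- Levenshtein distances of all suffixes of `xs` to `ys` (formerly in Mathlib). -/
def suffixLevenshtein {α β δ : Type*} [AddZeroClass δ] [Min δ] (C : Levenshtein.Cost α β δ)
    (xs : List α) (ys : List β) : {r : List δ // 0 < r.length} :=
  ys.foldr
    (Levenshtein.impl C xs)
    (xs.foldr (init := ⟨[0], by simp⟩) (fun a ⟨r, w⟩ => ⟨(C.delete a + r[0]) :: r, by simp⟩))

/-- The Levenshtein distance (formerly in Mathlib). -/
def levenshtein {α β δ : Type*} [AddZeroClass δ] [Min δ] (C : Levenshtein.Cost α β δ)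
    (xs : List α) (ys : List β) : δ :=
  let ⟨r, w⟩ := suffixLevenshtein C xs ys
  r[0]

/-- The edit distance between two lists (Levenshtein distance with unit costs). -/
def ED {α : Type*} [DecidableEq α] (X Y : List α) : ℕ :=
  levenshtein Levenshtein.defaultCost X Y

/-- The substring X[i..j) of a list. -/
def sub {α : Type*} (X : List α) (i j : ℕ) : List α := (X.drop i).take (j - i)

/-!
Write `U = X[i..j)` and `V = Y[i..j)`, both of length `L = j - i`; `Y` is the rotation of `X` by
`n - s`, so `V` is `U` shifted right by `s` places. Deleting the last `s` letters of `U` and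
inserting the first `s` letters of `V` gives `ED ≤ 2s`. Conversely, an alignment that matches no
equal letters costs at least `L ≥ 2s`, and one that matches `U[a] = V[b]` has to make up the
offset `|a - b|` both before and after that match. As the letters of `X` are distinct, `b - a` is
`s` or `s - n`, of absolute value at least `s` because `2s ≤ n`.
-/

section Levenshtein
variable {α β δ : Type*} [AddZeroClass δ] [Min δ] (C : Levenshtein.Cost α β δ)

theorem Levenshtein.impl_cons_fst (x : α) (xs : List α) (y : β)
    (d e : {r : List δ // 0 < r.length}) (d₀ : δ) (h : d.1 = d₀ :: e.1) :
    (Levenshtein.impl C (x :: xs) y d).1 =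
      min (C.delete x + (Levenshtein.impl C xs y e).1[0]'(Levenshtein.impl C xs y e).2)
        (min (C.insert y + d₀) (C.substitute x y + e.1[0]'e.2)) ::
        (Levenshtein.impl C xs y e).1 := by
  obtain ⟨ds, w⟩ := d
  obtain ⟨_ | ⟨_, _⟩, w'⟩ := e
  · simp at w'
  · simp only at h
    subst h
    rfl

theorem suffixLevenshtein_cons_fst_tail (x : α) (xs : List α) (ys : List β) :
    (suffixLevenshtein C (x :: xs) ys).1.tail = (suffixLevenshtein C xs ys).1 := by
  induction ys with
  | nil => rfl
  | cons y ys ih =>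
    have h : (suffixLevenshtein C (x :: xs) ys).1 =
        (suffixLevenshtein C (x :: xs) ys).1.head
          (List.ne_nil_of_length_pos (suffixLevenshtein C (x :: xs) ys).2) ::
          (suffixLevenshtein C xs ys).1 := by
      rw [← ih, List.cons_head_tail]
    exact congrArg List.tail (Levenshtein.impl_cons_fst C x xs y _ _ _ h)

theorem suffixLevenshtein_cons_fst (x : α) (xs : List α) (ys : List β) :
    (suffixLevenshtein C (x :: xs) ys).1 =
      levenshtein C (x :: xs) ys :: (suffixLevenshtein C xs ys).1 := by
  show _ = (suffixLevenshtein C (x :: xs) ys).1[0]'(suffixLevenshtein C (x :: xs) ys).2 :: _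
  rw [List.getElem_zero, ← suffixLevenshtein_cons_fst_tail C x xs ys, List.cons_head_tail]

theorem suffixLevenshtein_nil_fst (ys : List β) :
    (suffixLevenshtein C [] ys).1 = [levenshtein C [] ys] := by
  cases ys <;> rfl

theorem levenshtein_cons_nil (x : α) (xs : List α) :
    levenshtein C (x :: xs) ([] : List β) = C.delete x + levenshtein C xs [] := rfl

theorem levenshtein_nil_cons (y : β) (ys : List β) :
    levenshtein C ([] : List α) (y :: ys) = levenshtein C [] ys + C.insert y := by
  show (suffixLevenshtein C [] ys).1.getLast _ + C.insert y = _
  simp only [suffixLevenshtein_nil_fst, List.getLast_singleton]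

theorem levenshtein_cons_cons (x : α) (xs : List α) (y : β) (ys : List β) :
    levenshtein C (x :: xs) (y :: ys) =
      min (C.delete x + levenshtein C xs (y :: ys))
        (min (C.insert y + levenshtein C (x :: xs) ys)
          (C.substitute x y + levenshtein C xs ys)) := by
  show (Levenshtein.impl C (x :: xs) y (suffixLevenshtein C (x :: xs) ys)).1[0]'_ = _
  simp only [Levenshtein.impl_cons_fst C x xs y _ _ _ (suffixLevenshtein_cons_fst C x xs ys),
    List.getElem_cons_zero]
  rfl

end Levenshtein

section EditDistance
variable {α : Type*} [DecidableEq α]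

theorem ED_nil_left (V : List α) : ED [] V = V.length := by
  induction V with
  | nil => rfl
  | cons y V ih =>
    rw [ED, levenshtein_nil_cons, ← ED, ih]
    rfl

theorem ED_nil_right (U : List α) : ED U [] = U.length := by
  induction U with
  | nil => rfl
  | cons x U ih =>
    rw [ED, levenshtein_cons_nil, ← ED, ih, List.length_cons, add_comm]
    rfl

theorem ED_cons_cons (x y : α) (U V : List α) :
    ED (x :: U) (y :: V) =
      min (1 + ED U (y :: V)) (min (1 + ED (x :: U) V) ((if x = y then 0 else 1) + ED U V)) :=
  levenshtein_cons_cons _ x U y V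

theorem ED_cons_right_le (U : List α) (y : α) (V : List α) : ED U (y :: V) ≤ 1 + ED U V := by
  cases U with
  | nil => simp only [ED_nil_left, List.length_cons]; omega
  | cons x U => rw [ED_cons_cons]; exact (min_le_right _ _).trans (min_le_left _ _)

theorem ED_append_left_le (U A V : List α) : ED U (A ++ V) ≤ A.length + ED U V := by
  induction A with
  | nil => simp
  | cons a A ih =>
    have := ED_cons_right_le U a (A ++ V)
    simp only [List.cons_append, List.length_cons]
    omega

theorem ED_append_self_le (U B : List α) : ED (U ++ B) U ≤ B.length := by
  induction U with
  | nil => simp [ED_nil_right]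
  | cons x U ih =>
    rw [List.cons_append, ED_cons_cons, if_pos rfl, zero_add]
    exact (min_le_right _ _).trans ((min_le_right _ _).trans ih)

theorem ED_append_rotate_le (M A B : List α) : ED (M ++ B) (A ++ M) ≤ A.length + B.length :=
  (ED_append_left_le _ A M).trans (Nat.add_le_add_left (ED_append_self_le M B) _)

theorem ED_le_of_drop_eq_take {U V : List α} {s : ℕ} (h : V.drop s = U.take (U.length - s)) :
    ED U V ≤ 2 * s := by
  have hU : U = U.take (U.length - s) ++ U.drop (U.length - s) := (List.take_append_drop _ _).symm
  have hV : V = V.take s ++ U.take (U.length - s) := by rw [← h, List.take_append_drop]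
  have := ED_append_rotate_le (U.take (U.length - s)) (V.take s) (U.drop (U.length - s))
  rw [← hU, ← hV, List.length_take, List.length_drop] at this
  omega

theorem le_ED_of_forall_getElem_eq {k : ℕ} (U V : List α) (hk : k ≤ max U.length V.length)
    (hmatch : ∀ a b (ha : a < U.length) (hb : b < V.length), U[a] = V[b] →
      k ≤ a.dist b + (U.length - a).dist (V.length - b)) :
    k ≤ ED U V := by
  induction U generalizing V k with
  | nil => simpa [ED_nil_left] using hk
  | cons x U ih =>
    induction V generalizing k with
    | nil => simpa [ED_nil_right] using hk
    | cons y V ihV =>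
      simp only [List.length_cons] at hk hmatch
      rw [ED_cons_cons]
      refine le_min ?_ (le_min ?_ ?_)
      · suffices k - 1 ≤ ED U (y :: V) by omega
        refine ih (k := k - 1) (y :: V) (by simp only [List.length_cons]; omega)
          fun a b ha hb hab => ?_
        have := hmatch (a + 1) b (by omega) hb hab
        simp only [List.length_cons, Nat.dist] at this ⊢
        omega
      · suffices k - 1 ≤ ED (x :: U) V by omega
        refine ihV (k := k - 1) (by simp only [List.length_cons]; omega) fun a b ha hb hab => ?_
        have := hmatch a (b + 1) ha (by omega) hab
        simp only [List.length_cons, Nat.dist] at this ⊢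
        omega
      · split_ifs with hxy
        · have h₀ := hmatch 0 0 (by omega) (by omega) hxy
          rw [zero_add]
          refine ih (k := k) V (by simp only [Nat.dist] at h₀; omega) fun a b ha hb hab => ?_
          have := hmatch (a + 1) (b + 1) (by omega) (by omega) hab
          simp only [Nat.dist] at this ⊢
          omega
        · suffices k - 1 ≤ ED U V by omega
          refine ih (k := k - 1) V (by omega) fun a b ha hb hab => ?_
          have := hmatch (a + 1) (b + 1) (by omega) (by omega) hab
          simp only [Nat.dist] at this ⊢
          omega

end EditDistance

section Substring
variable {α : Type*}

theorem length_sub (X : List α) {i j : ℕ} (hj : j ≤ X.length) :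
    (sub X i j).length = j - i := by
  simp only [sub, List.length_take, List.length_drop]
  omega

theorem getElem_sub (X : List α) (i j a : ℕ) (h : a < (sub X i j).length) :
    (sub X i j)[a] =
      X[i + a]'(by simp only [sub, List.length_take, List.length_drop] at h; omega) := by
  simp [sub]

theorem sub_zero_of_length_le {X : List α} {j : ℕ} (h : X.length ≤ j) : sub X 0 j = X := by
  simp [sub, List.take_of_length_le h]

theorem drop_sub_rotate (X : List α) {s i j : ℕ} (hs : s ≤ X.length) (hj : j ≤ X.length) :
    (sub (X.rotate (X.length - s)) i j).drop s = (sub X i j).take (j - i - s) := by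
  apply List.ext_getElem
  · simp only [List.length_drop, List.length_take, length_sub _ hj,
      length_sub _ (hj.trans_eq (X.length_rotate _).symm)]
    omega
  · intro c h₁ h₂
    simp only [List.getElem_drop, List.getElem_take, getElem_sub, List.getElem_rotate]
    simp only [List.length_drop, length_sub _ (hj.trans_eq (X.length_rotate _).symm)] at h₁
    congr 1
    rw [show i + (s + c) + (X.length - s) = i + c + X.length by omega, Nat.add_mod_right,
      Nat.mod_eq_of_lt (by omega)]

theorem ED_sub_rotate_le [DecidableEq α] (X : List α) {s i j : ℕ} (hs : s ≤ X.length)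
    (hj : j ≤ X.length) : ED (sub X i j) (sub (X.rotate (X.length - s)) i j) ≤ 2 * s := by
  apply ED_le_of_drop_eq_take
  rw [drop_sub_rotate X hs hj, length_sub X hj]

theorem le_ED_sub_rotate [DecidableEq α] {X : List α} (hX : X.Nodup) {s i j : ℕ}
    (hs : 2 * s ≤ X.length) (hj : j ≤ X.length) (hL : 2 * s ≤ j - i) :
    2 * s ≤ ED (sub X i j) (sub (X.rotate (X.length - s)) i j) := by
  have hjr : j ≤ (X.rotate (X.length - s)).length := hj.trans_eq (X.length_rotate _).symm
  apply le_ED_of_forall_getElem_eq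
  · rw [length_sub X hj]; omega
  · intro a b ha hb hab
    rw [length_sub X hj] at ha ⊢
    rw [length_sub _ hjr] at hb ⊢
    rw [getElem_sub, getElem_sub, List.getElem_rotate, hX.getElem_inj_iff] at hab
    simp only [Nat.dist]
    rcases le_or_gt s (i + b) with hsb | hsb
    · rw [show i + b + (X.length - s) = i + b - s + X.length by omega, Nat.add_mod_right,
        Nat.mod_eq_of_lt (by omega)] at hab
      omega
    · rw [Nat.mod_eq_of_lt (by omega)] at hab
      omega

end Substring

/-- If X has n pairwise distinct characters and Y is obtained by moving the last s
characters of X to the front (s ≤ n/2), then ED(X,Y) = 2s, and every aligned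
substring pair X[i..j), Y[i..j) with j − i ≥ 2s also has edit distance exactly 2s. -/
theorem stmt_15 {α : Type*} [DecidableEq α] (n s : ℕ) (X Y : List α)
    (hX : X.length = n) (hnodup : X.Nodup)
    (hs : 2 * s ≤ n)
    (hY : Y = X.drop (n - s) ++ X.take (n - s)) :
    ED X Y = 2 * s ∧
      ∀ i j : ℕ, i ≤ j → j ≤ n → 2 * s ≤ j - i → ED (sub X i j) (sub Y i j) = 2 * s := by
  subst hX
  rw [← List.rotate_eq_drop_append_take (Nat.sub_le _ _)] at hY
  subst hY
  have hsub : ∀ i j, j ≤ X.length → 2 * s ≤ j - i →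
      ED (sub X i j) (sub (X.rotate (X.length - s)) i j) = 2 * s := fun i j hj hL =>
    le_antisymm (ED_sub_rotate_le X (by omega) hj) (le_ED_sub_rotate hnodup hs hj hL)
  refine ⟨?_, fun i j _ hj hL => hsub i j hj hL⟩
  have := hsub 0 X.length le_rfl (by omega)
  rwa [sub_zero_of_length_le le_rfl, sub_zero_of_length_le (X.length_rotate _).le] at this
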